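/- arXiv:2106.07245 — 2 statements merged into one kernel-verified Lean document; each statement's English description precedes it below -/
import Mathlib

section
/- Let n ≥ 1, N ≥ 1 and d ≥ 2N + 3n − 1 be integers. Let p_1, …, p_N ∈ ℂ³, p_i = (x_i, y_i, z_i), be points with (x_i, y_i) ≠ (0,0) for all i and with the classes [x_i : y_i] ∈ P¹ pairwise distinct. Then the ℂ-subspace {f ∈ V_{d,n} : f is singular at p_1, …, p_N} has dimension 4d + 4 − 6n − 3N; that is, being singular at the N points imposes exactly 3N independent linear conditions on V_{d,n}. -/
open MvPolynomial

noncomputable section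

/-- The weights on the variables `x, y, z`: `deg x = deg y = 1`, `deg z = n`. -/
def wt (n : ℕ) : Fin 3 → ℕ := ![1, 1, n]

/-- The subspace of `ℂ[x,y,z]` of polynomials whose degree in `z` is at most `h`. -/
def degZle (h : ℕ) : Submodule ℂ (MvPolynomial (Fin 3) ℂ) where
  carrier := {f | f.degreeOf 2 ≤ h}
  zero_mem' := by simp [Set.mem_setOf_eq, degreeOf_zero]
  add_mem' := by
    intro f g hf hg
    exact le_trans (degreeOf_add_le _ _ _) (max_le hf hg)
  smul_mem' := by
    intro c f hf
    rw [Set.mem_setOf_eq, smul_eq_C_mul]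
    exact le_trans (degreeOf_C_mul_le _ _ _) hf

/-- `V^{(h)}_{d,n}`: the space of polynomials in `ℂ[x,y,z]` that are weighted homogeneous of
degree `d` for the weights `deg x = deg y = 1`, `deg z = n`, and have degree at most `h` in `z`.
This is the space of global sections of `O(hEₙ + dFₙ)` on the Hirzebruch surface `𝔽ₙ`. -/
def Vh (h d n : ℕ) : Submodule ℂ (MvPolynomial (Fin 3) ℂ) :=
  weightedHomogeneousSubmodule ℂ (wt n) d ⊓ degZle h

/-- `V_{d,n}`, the space of global sections of `O(3Eₙ + dFₙ)` on `𝔽ₙ`. -/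
def V (d n : ℕ) : Submodule ℂ (MvPolynomial (Fin 3) ℂ) := Vh 3 d n

/-- `f` is singular at the point `p`: all partial derivatives of `f` vanish at `p`. -/
def SingularAt {σ : Type*} (f : MvPolynomial σ ℂ) (p : σ → ℂ) : Prop :=
  ∀ i, eval p (pderiv i f) = 0

/-- The subspace of polynomials singular at every point of the family `p`. -/
def singSub {ι σ : Type*} (p : ι → σ → ℂ) : Submodule ℂ (MvPolynomial σ ℂ) where
  carrier := {f | ∀ j, SingularAt f (p j)}
  zero_mem' := by intro j i; simp
  add_mem' := by
    intro f g hf hg j i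
    simp [map_add, hf j i, hg j i]
  smul_mem' := by
    intro c f hf j i
    simp [smul_eq_C_mul, pderiv_C_mul, hf j i]

/-! The gradients at the points `p j` define a linear map `V_{d,n} → (ℂ³)ᴺ` whose kernel is the
singular subspace; `V_{d,n}` has the monomial basis `x^i y^(d-kn-i) z^k`, `k ≤ 3`, of size
`4d + 4 - 6n`, so it suffices that this map is onto. For the point `p j`, take
`H = ℓ^r ∏_{k ≠ j} L_k²`, where `L_k` is the linear form in `x, y` vanishing on the ruling line
through `p k` and `ℓ(p j) = 1`. Every `H * M` is singular at the other points, and as `M` runs over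
`V^{(1)}_{n+1,n}` the gradients of `H * M` at `p j` fill `ℂ³`: those with `M(p j) = 0` fill the
kernel of the Euler form `v ↦ ∑ wᵢ (p j)ᵢ vᵢ`, and by Euler's identity `M = ℓ^(n+1)` leaves it. -/

open Finset

lemma Submodule.eq_top_of_ker_le_of_apply_ne_zero {K V : Type*} [Field K] [AddCommGroup V]
    [Module K V] {φ : V →ₗ[K] K} {S : Submodule K V} (hker : LinearMap.ker φ ≤ S) {w : V}
    (hw : w ∈ S) (hφw : φ w ≠ 0) : S = ⊤ := by
  refine eq_top_iff'.2 fun v => ?_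
  have hv : v - (φ v / φ w) • w ∈ LinearMap.ker φ := by
    simp [div_mul_cancel₀ _ hφw]
  simpa using S.add_mem (hker hv) (S.smul_mem (φ v / φ w) hw)

lemma Submodule.finrank_inf_ker_add_finrank_map {K V W : Type*} [Field K] [AddCommGroup V]
    [Module K V] [AddCommGroup W] [Module K W] (f : V →ₗ[K] W) (U : Submodule K V)
    [FiniteDimensional K U] :
    Module.finrank K ↥(U ⊓ LinearMap.ker f) + Module.finrank K ↥(U.map f) =
      Module.finrank K U := by
  rw [← (f.domRestrict U).finrank_range_add_finrank_ker, LinearMap.range_domRestrict,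
    LinearMap.ker_domRestrict, ← Submodule.finrank_map_subtype_eq, Submodule.map_comap_subtype,
    add_comm]

lemma isCoprime_of_pair_ne_zero {K : Type*} [Field K] {a b : K} (h : (a, b) ≠ (0, 0)) :
    IsCoprime a b := by
  rcases eq_or_ne a 0 with rfl | ha
  · have hb : b ≠ 0 := by simpa using h
    exact ⟨0, b⁻¹, by simp [hb]⟩
  · exact ⟨a⁻¹, 0, by simp [ha]⟩

section Gradient

variable {R σ : Type*} [CommSemiring R]

def gradAt (q : σ → R) : MvPolynomial σ R →ₗ[R] σ → R where
  toFun f i := eval q (pderiv i f)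
  map_add' f g := by ext; simp
  map_smul' c f := by ext; simp

@[simp]
lemma gradAt_apply (q : σ → R) (f : MvPolynomial σ R) (i : σ) :
    gradAt q f i = eval q (pderiv i f) := rfl

lemma gradAt_mul (q : σ → R) (f g : MvPolynomial σ R) :
    gradAt q (f * g) = eval q f • gradAt q g + eval q g • gradAt q f := by
  ext i
  simp

lemma gradAt_mul_of_eval_eq_zero {q : σ → R} {g : MvPolynomial σ R} (hg : eval q g = 0)
    (f : MvPolynomial σ R) : gradAt q (f * g) = eval q f • gradAt q g := by
  simp [gradAt_mul, hg]

lemma gradAt_pow (q : σ → R) (f : MvPolynomial σ R) (k : ℕ) :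
    gradAt q (f ^ k) = (k * eval q f ^ (k - 1)) • gradAt q f := by
  ext i
  simp only [gradAt_apply, Derivation.leibniz_pow, smul_eq_mul, nsmul_eq_mul, map_mul,
    map_natCast, map_pow, Pi.smul_apply]
  ring

lemma gradAt_X [DecidableEq σ] (q : σ → R) (i : σ) : gradAt q (X i) = Pi.single i 1 := by
  ext j
  simp [pderiv_X, Pi.single_apply, eq_comm]

lemma gradAt_C_mul (q : σ → R) (c : R) (f : MvPolynomial σ R) :
    gradAt q (C c * f) = c • gradAt q f := by
  rw [← smul_eq_C_mul, map_smul]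

def eulerForm [Fintype σ] (w : σ → ℕ) (q : σ → R) : (σ → R) →ₗ[R] R :=
  ∑ i, (w i * q i) • LinearMap.proj i

theorem MvPolynomial.IsWeightedHomogeneous.eulerForm_gradAt [Fintype σ] {w : σ → ℕ}
    {f : MvPolynomial σ R} {δ : ℕ} (hf : f.IsWeightedHomogeneous w δ) (q : σ → R) :
    eulerForm w q (gradAt q f) = δ * eval q f := by
  have := congrArg (eval q) hf.sum_weight_X_mul_pderiv
  simpa [eulerForm, mul_assoc] using this

end Gradient

lemma singularAt_iff_gradAt_eq_zero {σ : Type*} {f : MvPolynomial σ ℂ} {q : σ → ℂ} :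
    SingularAt f q ↔ gradAt q f = 0 := by
  simp [SingularAt, funext_iff]

lemma singularAt_sq_mul {σ : Type*} {L : MvPolynomial σ ℂ} {q : σ → ℂ} (hL : eval q L = 0)
    (g : MvPolynomial σ ℂ) : SingularAt (L ^ 2 * g) q := by
  rw [singularAt_iff_gradAt_eq_zero, gradAt_mul, gradAt_pow]
  simp [hL]

def evalGrad {ι σ : Type*} (p : ι → σ → ℂ) : MvPolynomial σ ℂ →ₗ[ℂ] ι → σ → ℂ :=
  LinearMap.pi fun j => gradAt (p j)

lemma ker_evalGrad {ι σ : Type*} (p : ι → σ → ℂ) : LinearMap.ker (evalGrad p) = singSub p := by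
  ext f
  simp [evalGrad, singSub, SingularAt, funext_iff]

lemma weight_wt (n : ℕ) (m : Fin 3 →₀ ℕ) : Finsupp.weight (wt n) m = m 0 + m 1 + m 2 * n := by
  simp [Finsupp.weight_eq_sum, Fin.sum_univ_three, wt]

def vhExponent (d n : ℕ) (t : Σ _ : ℕ, ℕ) : Fin 3 →₀ ℕ :=
  Finsupp.single 0 t.2 + Finsupp.single 1 (d - t.1 * n - t.2) + Finsupp.single 2 t.1

@[simp]
lemma vhExponent_zero (d n : ℕ) (t : Σ _ : ℕ, ℕ) : vhExponent d n t 0 = t.2 := by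
  simp [vhExponent]

@[simp]
lemma vhExponent_one (d n : ℕ) (t : Σ _ : ℕ, ℕ) : vhExponent d n t 1 = d - t.1 * n - t.2 := by
  simp [vhExponent]

@[simp]
lemma vhExponent_two (d n : ℕ) (t : Σ _ : ℕ, ℕ) : vhExponent d n t 2 = t.1 := by
  simp [vhExponent]

lemma vhExponent_injective (d n : ℕ) : Function.Injective (vhExponent d n) := by
  rintro ⟨k, i⟩ ⟨k', i'⟩ h
  have h0 : i = i' := by simpa using DFunLike.congr_fun h 0
  have h2 : k = k' := by simpa using DFunLike.congr_fun h 2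
  rw [h0, h2]

def vhIndex (h d n : ℕ) : Finset (Σ _ : ℕ, ℕ) :=
  (range (h + 1)).sigma fun k => range (d + 1 - k * n)

lemma mem_image_vhExponent_iff {h d n : ℕ} {m : Fin 3 →₀ ℕ} :
    m ∈ (vhIndex h d n).image (vhExponent d n) ↔ m 0 + m 1 + m 2 * n = d ∧ m 2 ≤ h := by
  simp only [mem_image, vhIndex, mem_sigma, mem_range, Sigma.exists]
  constructor
  · rintro ⟨k, i, ⟨hk, hi⟩, rfl⟩
    simp only [vhExponent_zero, vhExponent_one, vhExponent_two]
    omega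
  · rintro ⟨hw, hz⟩
    refine ⟨m 2, m 0, ⟨by omega, by omega⟩, ?_⟩
    ext i
    fin_cases i <;> simp
    omega

lemma Vh_eq_restrictSupport (h d n : ℕ) :
    Vh h d n = restrictSupport ℂ ↑((vhIndex h d n).image (vhExponent d n)) := by
  ext f
  simp only [Vh, degZle, Submodule.mem_inf, mem_weightedHomogeneousSubmodule,
    Submodule.mem_mk, AddSubmonoid.mem_mk, AddSubsemigroup.mem_mk, Set.mem_ofPred_eq,
    mem_restrictSupport_iff, degreeOf_le_iff, IsWeightedHomogeneous, weight_wt, Set.subset_def,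
    mem_coe, mem_image_vhExponent_iff, mem_support_iff]
  grind

theorem finrank_Vh (h d n : ℕ) :
    Module.finrank ℂ (Vh h d n) = ∑ k ∈ range (h + 1), (d + 1 - k * n) := by
  rw [Vh_eq_restrictSupport, Module.finrank_eq_nat_card_basis (basisRestrictSupport ℂ _),
    Nat.card_coe_set_eq, Set.ncard_coe_finset,
    card_image_of_injective _ (vhExponent_injective d n), vhIndex, card_sigma]
  simp

instance (d n : ℕ) : FiniteDimensional ℂ (V d n) :=
  Module.Finite.of_basis ((basisRestrictSupport ℂ _).map
    (LinearEquiv.ofEq _ _ (Vh_eq_restrictSupport 3 d n).symm))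

section Vh

variable {n : ℕ}

lemma mul_mem_Vh {h h' d d' : ℕ} {f g : MvPolynomial (Fin 3) ℂ} (hf : f ∈ Vh h d n)
    (hg : g ∈ Vh h' d' n) : f * g ∈ Vh (h + h') (d + d') n :=
  ⟨hf.1.mul hg.1, (degreeOf_mul_le 2 f g).trans (add_le_add hf.2 hg.2)⟩

lemma pow_mem_Vh {h d : ℕ} {f : MvPolynomial (Fin 3) ℂ} (hf : f ∈ Vh h d n) (k : ℕ) :
    f ^ k ∈ Vh (k * h) (k * d) n :=
  ⟨hf.1.pow k, (degreeOf_pow_le 2 f k).trans (Nat.mul_le_mul_left k hf.2)⟩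

lemma prod_mem_Vh {ι : Type*} (s : Finset ι) {h d : ι → ℕ} {f : ι → MvPolynomial (Fin 3) ℂ}
    (hf : ∀ i ∈ s, f i ∈ Vh (h i) (d i) n) : ∏ i ∈ s, f i ∈ Vh (∑ i ∈ s, h i) (∑ i ∈ s, d i) n :=
  ⟨IsWeightedHomogeneous.prod s f d fun i hi => (hf i hi).1,
    (degreeOf_prod_le 2 s f).trans (sum_le_sum fun i hi => (hf i hi).2)⟩

lemma Vh_mono {h h' d : ℕ} (hh : h ≤ h') : Vh h d n ≤ Vh h' d n :=
  fun _ hf => ⟨hf.1, hf.2.trans hh⟩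

lemma X_two_mem_Vh : X 2 ∈ Vh 1 n n :=
  ⟨isWeightedHomogeneous_X ℂ (wt n) 2, (degreeOf_X_self 2).le⟩

def linXY (u v : ℂ) : MvPolynomial (Fin 3) ℂ := C u * X 0 + C v * X 1

@[simp]
lemma eval_linXY (q : Fin 3 → ℂ) (u v : ℂ) : eval q (linXY u v) = u * q 0 + v * q 1 := by
  simp [linXY]

lemma gradAt_linXY (q : Fin 3 → ℂ) (u v : ℂ) : gradAt q (linXY u v) = ![u, v, 0] := by
  ext i
  fin_cases i <;> simp [linXY, pderiv_X]

lemma linXY_mem_Vh (u v : ℂ) : linXY u v ∈ Vh 0 1 n := by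
  refine ⟨((isWeightedHomogeneous_X ℂ (wt n) 0).C_mul u).add
    ((isWeightedHomogeneous_X ℂ (wt n) 1).C_mul v), ?_⟩
  refine (degreeOf_add_le _ _ _).trans (max_le ?_ ?_) <;>
    exact (degreeOf_C_mul_le _ _ _).trans (degreeOf_X_of_ne (by decide)).le

end Vh

lemma exists_mem_Vh_gradAt_mul_eq {n e : ℕ} {q : Fin 3 → ℂ} (hq : (q 0, q 1) ≠ (0, 0))
    {H : MvPolynomial (Fin 3) ℂ} (hH : H.IsWeightedHomogeneous (wt n) e) (hHq : eval q H ≠ 0)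
    (t : Fin 3 → ℂ) : ∃ M ∈ Vh 1 (n + 1) n, gradAt q (H * M) = t := by
  obtain ⟨a, b, hab⟩ := isCoprime_of_pair_ne_zero hq
  set ℓ := linXY a b
  have hℓq : eval q ℓ = 1 := by simpa [ℓ] using hab
  have hℓ : ℓ ∈ Vh 0 1 n := linXY_mem_Vh a b
  set S := (Vh 1 (n + 1) n).map (gradAt q ∘ₗ LinearMap.mulLeft ℂ H)
  have hS : ∀ M ∈ Vh 1 (n + 1) n, gradAt q (H * M) ∈ S := fun M hM ↦
    Submodule.mem_map_of_mem (f := gradAt q ∘ₗ LinearMap.mulLeft ℂ H) hM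
  suffices S = ⊤ by
    obtain ⟨M, hM, hMt⟩ := this ▸ Submodule.mem_top (x := t)
    exact ⟨M, hM, hMt⟩
  have hℓpow : ℓ ^ (n + 1) ∈ Vh 1 (n + 1) n := by
    simpa using Vh_mono zero_le_one (pow_mem_Vh hℓ (n + 1))
  refine Submodule.eq_top_of_ker_le_of_apply_ne_zero (φ := eulerForm (wt n) q) ?_ (hS _ hℓpow) ?_
  · intro s hs
    have hs' : q 0 * s 0 + q 1 * s 1 + n * q 2 * s 2 = 0 := by
      simpa [eulerForm, Fin.sum_univ_three, wt] using hs
    have hM₁ : ℓ ^ n * linXY (q 1) (-q 0) ∈ Vh 1 (n + 1) n := by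
      simpa using Vh_mono zero_le_one (mul_mem_Vh (pow_mem_Vh hℓ n) (linXY_mem_Vh (q 1) (-q 0)))
    have hM₂ : ℓ * (X 2 - C (q 2) * ℓ ^ n) ∈ Vh 1 (n + 1) n := by
      have hC : C (q 2) * ℓ ^ n ∈ Vh 1 n n := by
        simpa [smul_eq_C_mul] using
          (Vh 1 n n).smul_mem (q 2) (by simpa using Vh_mono zero_le_one (pow_mem_Vh hℓ n))
      simpa [add_comm] using mul_mem_Vh hℓ (sub_mem X_two_mem_Vh hC)
    have hgrad₁ : gradAt q (H * (ℓ ^ n * linXY (q 1) (-q 0))) = eval q H • ![q 1, -q 0, 0] := by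
      have hL : eval q (linXY (q 1) (-q 0)) = 0 := by rw [eval_linXY]; ring
      rw [gradAt_mul_of_eval_eq_zero (by simp [hL]), gradAt_mul_of_eval_eq_zero hL, gradAt_linXY]
      simp [hℓq]
    have hgrad₂ : gradAt q (H * (ℓ * (X 2 - C (q 2) * ℓ ^ n))) =
        eval q H • ![-(n * q 2 * a), -(n * q 2 * b), 1] := by
      have hZ : eval q (X 2 - C (q 2) * ℓ ^ n) = 0 := by simp [hℓq]
      rw [gradAt_mul_of_eval_eq_zero (by simp [hZ]), gradAt_mul_of_eval_eq_zero hZ, map_sub,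
        gradAt_X, gradAt_C_mul, gradAt_pow, gradAt_linXY]
      ext i
      fin_cases i <;> simp [hℓq, Matrix.vecHead, Matrix.vecTail, mul_assoc, mul_left_comm]
    have hs_eq : s =
        ((b * s 0 - a * s 1) / eval q H) • gradAt q (H * (ℓ ^ n * linXY (q 1) (-q 0))) +
        (s 2 / eval q H) • gradAt q (H * (ℓ * (X 2 - C (q 2) * ℓ ^ n))) := by
      rw [hgrad₁, hgrad₂, smul_smul, smul_smul, div_mul_cancel₀ _ hHq, div_mul_cancel₀ _ hHq]
      ext i
      fin_cases i
      · show s 0 = (b * s 0 - a * s 1) * q 1 + s 2 * -(n * q 2 * a)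
        linear_combination (-s 0) * hab + a * hs'
      · show s 1 = (b * s 0 - a * s 1) * -q 0 + s 2 * -(n * q 2 * b)
        linear_combination (-s 1) * hab + b * hs'
      · show s 2 = (b * s 0 - a * s 1) * 0 + s 2 * 1
        ring
    rw [hs_eq]
    exact S.add_mem (S.smul_mem _ (hS _ hM₁)) (S.smul_mem _ (hS _ hM₂))
  · rw [(hH.mul hℓpow.1).eulerForm_gradAt, map_mul, map_pow, hℓq]
    refine mul_ne_zero ?_ (by simpa using hHq)
    exact_mod_cast (e + n).succ_ne_zero

lemma exists_mem_Vh_eval_ne_zero_singularAt {N n e : ℕ} {p : Fin N → Fin 3 → ℂ} {j : Fin N}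
    (hp : (p j 0, p j 1) ≠ (0, 0)) (hdist : ∀ k, j ≠ k → p j 0 * p k 1 ≠ p k 0 * p j 1)
    (he : 2 * (N - 1) ≤ e) :
    ∃ H ∈ Vh 0 e n, eval (p j) H ≠ 0 ∧ ∀ k ≠ j, ∀ g, SingularAt (H * g) (p k) := by
  obtain ⟨a, b, hab⟩ := isCoprime_of_pair_ne_zero hp
  refine ⟨linXY a b ^ (e - 2 * (N - 1)) * ∏ k ∈ univ.erase j, linXY (p k 1) (-p k 0) ^ 2,
    ?_, ?_, ?_⟩
  · have := mul_mem_Vh (pow_mem_Vh (linXY_mem_Vh a b (n := n)) (e - 2 * (N - 1)))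
      (prod_mem_Vh (univ.erase j) fun k _ => pow_mem_Vh (linXY_mem_Vh (p k 1) (-p k 0)) 2)
    simp only [mul_zero, mul_one, sum_const, card_erase_of_mem (mem_univ j), card_univ,
      Fintype.card_fin, smul_eq_mul, add_zero] at this
    convert this using 2
    omega
  · simp only [map_mul, map_pow, map_prod, eval_linXY, hab, one_pow, one_mul]
    refine prod_ne_zero_iff.2 fun k hk => pow_ne_zero 2 ?_
    have := hdist k (ne_of_mem_erase hk).symm
    contrapose! this
    linear_combination this
  · intro k hk g
    rw [← mul_prod_erase _ _ (mem_erase.2 ⟨hk, mem_univ k⟩),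
      show ∀ A B C : MvPolynomial (Fin 3) ℂ, A * (B * C) * g = B * (A * C * g) by
        intros; ring]
    exact singularAt_sq_mul (by rw [eval_linXY]; ring) _

lemma map_evalGrad_V_eq_top {N n d : ℕ} {p : Fin N → Fin 3 → ℂ}
    (hp : ∀ j, (p j 0, p j 1) ≠ (0, 0))
    (hdist : ∀ j j', j ≠ j' → p j 0 * p j' 1 ≠ p j' 0 * p j 1) (hd : 2 * N + n - 1 ≤ d) :
    (V d n).map (evalGrad p) = ⊤ := by
  refine Submodule.eq_top_iff'.2 fun x => ?_
  rw [← univ_sum_single x]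
  refine Submodule.sum_mem _ fun j _ => ?_
  have hN := j.pos
  obtain ⟨H, hH, hHj, hsing⟩ :=
    exists_mem_Vh_eval_ne_zero_singularAt (n := n) (hp j) (hdist j) (e := d - (n + 1)) (by omega)
  obtain ⟨M, hM, hMx⟩ := exists_mem_Vh_gradAt_mul_eq (hp j) hH.1 hHj (x j)
  refine ⟨H * M, ?_, ?_⟩
  · have := mul_mem_Vh hH hM
    rw [Nat.sub_add_cancel (by omega), zero_add] at this
    exact Vh_mono (by norm_num) this
  · ext k : 1
    by_cases hk : k = j
    · subst hk
      simp [evalGrad, hMx]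
    · simp [evalGrad, hk, singularAt_iff_gradAt_eq_zero.1 (hsing k hk M)]

theorem finrank_singular_subspace_general (n N d : ℕ)
    (hd : 2 * N + 3 * n - 1 ≤ d)
    (p : Fin N → Fin 3 → ℂ)
    (hp : ∀ j, (p j 0, p j 1) ≠ (0, 0))
    (hdist : ∀ j j', j ≠ j' → p j 0 * p j' 1 ≠ p j' 0 * p j 1) :
    Module.finrank ℂ ↥(V d n ⊓ singSub p) = 4 * d + 4 - 6 * n - 3 * N := by
  have hV : Module.finrank ℂ (V d n) = 4 * d + 4 - 6 * n := by
    rw [V, finrank_Vh]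
    simp only [sum_range_succ, sum_range_zero]
    omega
  have hrank := Submodule.finrank_inf_ker_add_finrank_map (evalGrad p) (V d n)
  rw [ker_evalGrad, map_evalGrad_V_eq_top hp hdist (by omega), finrank_top, hV] at hrank
  simp only [Module.finrank_pi_fintype, Module.finrank_self, sum_const, card_univ,
    Fintype.card_fin, smul_eq_mul] at hrank
  omega

/-- Lemma 2.5: for `n ≥ 1`, `N ≥ 1`, `d ≥ 2N + 3n - 1`, and `N` points of `𝔽ₙ` off the
exceptional section lying on pairwise distinct lines of the ruling, the subspace of `V_{d,n}`
of polynomials singular at all `N` points has dimension `4d + 4 - 6n - 3N`. -/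
theorem finrank_singular_subspace (n N d : ℕ) (hn : 1 ≤ n) (hN : 1 ≤ N)
    (hd : 2 * N + 3 * n - 1 ≤ d)
    (p : Fin N → Fin 3 → ℂ)
    (hp : ∀ j, (p j 0, p j 1) ≠ (0, 0))
    (hdist : ∀ j j', j ≠ j' → p j 0 * p j' 1 ≠ p j' 0 * p j 1) :
    Module.finrank ℂ ↥(V d n ⊓ singSub p) = 4 * d + 4 - 6 * n - 3 * N :=
  finrank_singular_subspace_general n N d hd p hp hdist

end
end

section
/- Let d ≥ 1 and let f ∈ W_d be bihomogeneous of bidegree (3,d). Let (a,b) ∈ ℂ² with (a,b) ≠ (0,0), and let p_1 = (X0_1, X1_1, a, b) and p_2 = (X0_2, X1_2, a, b) be two points with (X0_i, X1_i) ≠ (0,0) and [X0_1 : X1_1] ≠ [X0_2 : X1_2] (two distinct points of the line of the ruling of P¹×P¹ given by b·y0 − a·y1 = 0). If f is singular at both p_1 and p_2, then the linear form b·y0 − a·y1 divides f in ℂ[x0,x1,y0,y1]. -/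
open MvPolynomial

noncomputable section

/-- Weights recording the degree in the variables `x₀, x₁` on `ℂ[x₀,x₁,y₀,y₁]`. -/
def wx : Fin 4 → ℕ := ![1, 1, 0, 0]

/-- Weights recording the degree in the variables `y₀, y₁` on `ℂ[x₀,x₁,y₀,y₁]`. -/
def wy : Fin 4 → ℕ := ![0, 0, 1, 1]

/-- `W_d`: the space of bihomogeneous polynomials of bidegree `(3, d)` in `ℂ[x₀,x₁,y₀,y₁]`,
i.e. the space of global sections of `O(3,d)` on `ℙ¹ × ℙ¹ ≅ 𝔽₀`. -/
def W (d : ℕ) : Submodule ℂ (MvPolynomial (Fin 4) ℂ) :=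
  weightedHomogeneousSubmodule ℂ wx 3 ⊓ weightedHomogeneousSubmodule ℂ wy d

lemma weight_wx (m : Fin 4 →₀ ℕ) : Finsupp.weight wx m = m 0 + m 1 := by
  rw [Finsupp.weight_apply, Finsupp.sum_fintype _ _ (fun i => by simp)]
  simp [Fin.sum_univ_four, wx]

lemma weight_wy (m : Fin 4 →₀ ℕ) : Finsupp.weight wy m = m 2 + m 3 := by
  rw [Finsupp.weight_apply, Finsupp.sum_fintype _ _ (fun i => by simp)]
  simp [Fin.sum_univ_four, wy]

/-- The exponent vector of the monomial `x₀^i x₁^(3-i) y₀^j y₁^(d-j)`. -/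
def ee (d i j : ℕ) : Fin 4 →₀ ℕ :=
  Finsupp.single 0 i + Finsupp.single 1 (3-i) + Finsupp.single 2 j + Finsupp.single 3 (d-j)

lemma ee_apply0 (d i j : ℕ) : ee d i j 0 = i := by simp [ee, Finsupp.single_apply]
lemma ee_apply1 (d i j : ℕ) : ee d i j 1 = 3 - i := by simp [ee, Finsupp.single_apply]
lemma ee_apply2 (d i j : ℕ) : ee d i j 2 = j := by simp [ee, Finsupp.single_apply]
lemma ee_apply3 (d i j : ℕ) : ee d i j 3 = d - j := by simp [ee, Finsupp.single_apply]

/-- A bihomogeneous polynomial of bidegree `(3,d)` is the sum of its (finitely many possible)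
monomials. -/
lemma hrepr (d : ℕ) (f : MvPolynomial (Fin 4) ℂ) (hf : f ∈ W d) :
    f = ∑ i ∈ Finset.range 4, ∑ j ∈ Finset.range (d+1),
        monomial (ee d i j) (coeff (ee d i j) f) := by
  obtain ⟨hf1, hf2⟩ := Submodule.mem_inf.mp hf
  have hmem : ∀ m ∈ f.support, m = ee d (m 0) (m 2) ∧ m 0 < 4 ∧ m 2 < d + 1 := by
    intro m hm
    have h1 : Finsupp.weight wx m = 3 := hf1 (mem_support_iff.mp hm)
    have h2 : Finsupp.weight wy m = d := hf2 (mem_support_iff.mp hm)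
    rw [weight_wx] at h1; rw [weight_wy] at h2
    refine ⟨?_, by omega, by omega⟩
    ext l; fin_cases l <;>
      simp [ee, Finsupp.single_apply] <;> omega
  have hsub : f.support ⊆ (Finset.range 4 ×ˢ Finset.range (d+1)).image
      (fun p : ℕ × ℕ => ee d p.1 p.2) := by
    intro m hm
    obtain ⟨h1, h2, h3⟩ := hmem m hm
    exact Finset.mem_image.mpr ⟨(m 0, m 2), Finset.mem_product.mpr
      ⟨Finset.mem_range.mpr h2, Finset.mem_range.mpr h3⟩, h1.symm⟩
  calc f = ∑ m ∈ f.support, monomial m (coeff m f) := (support_sum_monomial_coeff f).symm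
    _ = ∑ m ∈ (Finset.range 4 ×ˢ Finset.range (d+1)).image (fun p : ℕ × ℕ => ee d p.1 p.2),
        monomial m (coeff m f) := by
        refine Finset.sum_subset hsub (fun m _ hm => ?_)
        rw [notMem_support_iff.mp hm, monomial_zero]
    _ = ∑ p ∈ Finset.range 4 ×ˢ Finset.range (d+1),
        monomial (ee d p.1 p.2) (coeff (ee d p.1 p.2) f) := by
        refine Finset.sum_image (fun p _ q _ hpq => ?_)
        have h0 := congrArg (fun g : Fin 4 →₀ ℕ => g 0) hpq
        have h2 := congrArg (fun g : Fin 4 →₀ ℕ => g 2) hpq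
        simp only [ee_apply0, ee_apply2] at h0 h2
        exact Prod.ext h0 h2
    _ = _ := by rw [Finset.sum_product]

/-- `AA d f a b i` is the coefficient of `x₀^i x₁^(3-i)` in `f(x₀,x₁,a,b)`. -/
def AA (d : ℕ) (f : MvPolynomial (Fin 4) ℂ) (a b : ℂ) (i : ℕ) : ℂ :=
  ∑ j ∈ Finset.range (d+1), coeff (ee d i j) f * a ^ j * b ^ (d - j)

lemma term_eval (d : ℕ) (co : ℂ) (i j : ℕ) (k : Fin 4) (P : Fin 4 → ℂ) :
    eval P (pderiv k (monomial (ee d i j) co)) =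
      co * ((ee d i j) k : ℂ) *
        ∏ l : Fin 4, P l ^ (((ee d i j - Finsupp.single k 1 : Fin 4 →₀ ℕ)) l) := by
  rw [pderiv_monomial, eval_monomial, Finsupp.prod_fintype _ _ fun _ => pow_zero _]

lemma sub_apply0 (d i j : ℕ) : ((ee d i j - Finsupp.single 0 1 : Fin 4 →₀ ℕ)) 0 = i - 1 := by
  simp [Finsupp.tsub_apply, ee_apply0]
lemma sub_apply01 (d i j : ℕ) : ((ee d i j - Finsupp.single 0 1 : Fin 4 →₀ ℕ)) 1 = 3 - i := by
  simp [Finsupp.tsub_apply, ee_apply1, Finsupp.single_apply]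
lemma sub_apply02 (d i j : ℕ) : ((ee d i j - Finsupp.single 0 1 : Fin 4 →₀ ℕ)) 2 = j := by
  simp [Finsupp.tsub_apply, ee_apply2, Finsupp.single_apply]
lemma sub_apply03 (d i j : ℕ) : ((ee d i j - Finsupp.single 0 1 : Fin 4 →₀ ℕ)) 3 = d - j := by
  simp [Finsupp.tsub_apply, ee_apply3, Finsupp.single_apply]
lemma sub_apply10 (d i j : ℕ) : ((ee d i j - Finsupp.single 1 1 : Fin 4 →₀ ℕ)) 0 = i := by
  simp [Finsupp.tsub_apply, ee_apply0, Finsupp.single_apply]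
lemma sub_apply11 (d i j : ℕ) : ((ee d i j - Finsupp.single 1 1 : Fin 4 →₀ ℕ)) 1 = 3 - i - 1 := by
  simp [Finsupp.tsub_apply, ee_apply1, Finsupp.single_apply]
lemma sub_apply12 (d i j : ℕ) : ((ee d i j - Finsupp.single 1 1 : Fin 4 →₀ ℕ)) 2 = j := by
  simp [Finsupp.tsub_apply, ee_apply2, Finsupp.single_apply]
lemma sub_apply13 (d i j : ℕ) : ((ee d i j - Finsupp.single 1 1 : Fin 4 →₀ ℕ)) 3 = d - j := by
  simp [Finsupp.tsub_apply, ee_apply3, Finsupp.single_apply]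

lemma pull (d : ℕ) (f : MvPolynomial (Fin 4) ℂ) (a b : ℂ) (i : ℕ) (K : ℂ) :
    (∑ j ∈ Finset.range (d+1), K * (coeff (ee d i j) f * a^j * b^(d-j)))
      = K * AA d f a b i := by
  rw [AA, Finset.mul_sum]

lemma heval0 {d : ℕ} {f : MvPolynomial (Fin 4) ℂ}
    (hre : f = ∑ i ∈ Finset.range 4, ∑ j ∈ Finset.range (d+1),
        monomial (ee d i j) (coeff (ee d i j) f)) (x0 x1 a b : ℂ) :
    eval ![x0,x1,a,b] (pderiv 0 f) =
      AA d f a b 1 * x1^2 + 2 * AA d f a b 2 * (x0*x1) + 3 * AA d f a b 3 * x0^2 := by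
  have step1 : eval ![x0,x1,a,b] (pderiv 0 f)
      = ∑ i ∈ Finset.range 4, ∑ j ∈ Finset.range (d+1),
          (i:ℂ) * (x0^(i-1) * x1^(3-i)) * (coeff (ee d i j) f * a^j * b^(d-j)) := by
    conv_lhs => rw [hre]
    simp only [map_sum]
    refine Finset.sum_congr rfl fun i _ => Finset.sum_congr rfl fun j _ => ?_
    rw [term_eval, Fin.prod_univ_four, sub_apply0, sub_apply01, sub_apply02, sub_apply03,
      ee_apply0]
    simp only [Matrix.cons_val_zero, Matrix.cons_val_one, Matrix.head_cons,
      Matrix.cons_val_two, Matrix.tail_cons, Matrix.cons_val_three]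
    ring
  rw [step1]
  rw [show (∑ i ∈ Finset.range 4, ∑ j ∈ Finset.range (d+1),
          (i:ℂ) * (x0^(i-1) * x1^(3-i)) * (coeff (ee d i j) f * a^j * b^(d-j)))
      = ∑ i ∈ Finset.range 4, ((i:ℂ) * (x0^(i-1) * x1^(3-i))) * AA d f a b i from
    Finset.sum_congr rfl fun i _ => pull d f a b i _]
  rw [Finset.sum_range_succ, Finset.sum_range_succ, Finset.sum_range_succ,
    Finset.sum_range_one]
  norm_num
  try ring

lemma heval1 {d : ℕ} {f : MvPolynomial (Fin 4) ℂ}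
    (hre : f = ∑ i ∈ Finset.range 4, ∑ j ∈ Finset.range (d+1),
        monomial (ee d i j) (coeff (ee d i j) f)) (x0 x1 a b : ℂ) :
    eval ![x0,x1,a,b] (pderiv 1 f) =
      3 * AA d f a b 0 * x1^2 + 2 * AA d f a b 1 * (x0*x1) + AA d f a b 2 * x0^2 := by
  have step1 : eval ![x0,x1,a,b] (pderiv 1 f)
      = ∑ i ∈ Finset.range 4, ∑ j ∈ Finset.range (d+1),
          ((3-i : ℕ):ℂ) * (x0^i * x1^(3-i-1)) * (coeff (ee d i j) f * a^j * b^(d-j)) := by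
    conv_lhs => rw [hre]
    simp only [map_sum]
    refine Finset.sum_congr rfl fun i _ => Finset.sum_congr rfl fun j _ => ?_
    rw [term_eval, Fin.prod_univ_four, sub_apply10, sub_apply11, sub_apply12, sub_apply13,
      ee_apply1]
    simp only [Matrix.cons_val_zero, Matrix.cons_val_one, Matrix.head_cons,
      Matrix.cons_val_two, Matrix.tail_cons, Matrix.cons_val_three]
    ring
  rw [step1]
  rw [show (∑ i ∈ Finset.range 4, ∑ j ∈ Finset.range (d+1),
          ((3-i : ℕ):ℂ) * (x0^i * x1^(3-i-1)) * (coeff (ee d i j) f * a^j * b^(d-j)))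
      = ∑ i ∈ Finset.range 4, (((3-i : ℕ):ℂ) * (x0^i * x1^(3-i-1))) * AA d f a b i from
    Finset.sum_congr rfl fun i _ => pull d f a b i _]
  rw [Finset.sum_range_succ, Finset.sum_range_succ, Finset.sum_range_succ,
    Finset.sum_range_one]
  norm_num
  try ring

lemma solveA (p q r s A0 A1 A2 A3 : ℂ)
    (hD : p * s - r * q ≠ 0)
    (e1 : A1 * q^2 + 2*A2*(p*q) + 3*A3*p^2 = 0)
    (e2 : 3*A0*q^2 + 2*A1*(p*q) + A2*p^2 = 0)
    (e3 : A1 * s^2 + 2*A2*(r*s) + 3*A3*r^2 = 0)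
    (e4 : 3*A0*s^2 + 2*A1*(r*s) + A2*r^2 = 0) :
    A0 = 0 ∧ A1 = 0 ∧ A2 = 0 ∧ A3 = 0 := by
  have hne : (9:ℂ) * (p*s - r*q)^4 ≠ 0 :=
    mul_ne_zero (by norm_num) (pow_ne_zero _ hD)
  refine ⟨mul_left_cancel₀ hne ?_, mul_left_cancel₀ hne ?_,
    mul_left_cancel₀ hne ?_, mul_left_cancel₀ hne ?_⟩
  · linear_combination (-6*p*q*r^4 + 6*p^2*r^3*s)*e1 + (3*q^2*r^4 - 12*p*q*r^3*s + 9*p^2*r^2*s^2)*e2 + (6*p^3*q*r^2 - 6*p^4*r*s)*e3 + (9*p^2*q^2*r^2 - 12*p^3*q*r*s + 3*p^4*s^2)*e4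
  · linear_combination (9*q^2*r^4 - 9*p^2*r^2*s^2)*e1 + (18*p*q*r^2*s^2 - 18*p^2*r*s^3)*e2 + (-9*p^2*q^2*r^2 + 9*p^4*s^2)*e3 + (-18*p*q^3*r^2 + 18*p^2*q^2*r*s)*e4
  · linear_combination (-18*q^2*r^3*s + 18*p*q*r^2*s^2)*e1 + (-9*q^2*r^2*s^2 + 9*p^2*s^4)*e2 + (18*p^2*q^2*r*s - 18*p^3*q*s^2)*e3 + (9*q^4*r^2 - 9*p^2*q^2*s^2)*e4
  · linear_combination (9*q^2*r^2*s^2 - 12*p*q*r*s^3 + 3*p^2*s^4)*e1 + (6*q^2*r*s^3 - 6*p*q*s^4)*e2 + (3*q^4*r^2 - 12*p*q^3*r*s + 9*p^2*q^2*s^2)*e3 + (-6*q^4*r*s + 6*p*q^3*s^2)*e4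

lemma dvd_b (d : ℕ) (co : ℕ → ℕ → ℂ) (a b : ℂ)
    (hA : ∀ i, (∑ j ∈ Finset.range (d+1), co i j * a ^ j * b ^ (d - j)) = 0) :
    (C b * X 2 - C a * X 3 : MvPolynomial (Fin 4) ℂ) ∣
      (C b)^d * ∑ i ∈ Finset.range 4, ∑ j ∈ Finset.range (d+1),
        monomial (ee d i j) (co i j) := by
  have hzero : (∑ i ∈ Finset.range 4, ∑ j ∈ Finset.range (d+1),
      C (co i j * a ^ j * b ^ (d - j)) * (X 0 ^ i * X 1 ^ (3-i) * X 3 ^ d)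
        : MvPolynomial (Fin 4) ℂ) = 0 := by
    refine Finset.sum_eq_zero fun i _ => ?_
    rw [← Finset.sum_mul, ← map_sum, hA i, map_zero, zero_mul]
  have key : (C b * X 2 - C a * X 3 : MvPolynomial (Fin 4) ℂ) ∣
      (C b)^d * (∑ i ∈ Finset.range 4, ∑ j ∈ Finset.range (d+1),
        monomial (ee d i j) (co i j))
      - ∑ i ∈ Finset.range 4, ∑ j ∈ Finset.range (d+1),
          C (co i j * a ^ j * b ^ (d - j)) * (X 0 ^ i * X 1 ^ (3-i) * X 3 ^ d) := by
    rw [Finset.mul_sum, ← Finset.sum_sub_distrib]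
    refine Finset.dvd_sum fun i _ => ?_
    rw [Finset.mul_sum, ← Finset.sum_sub_distrib]
    refine Finset.dvd_sum fun j hj => ?_
    have hj' : j ≤ d := Nat.lt_succ_iff.mp (Finset.mem_range.mp hj)
    have hmon : (monomial (ee d i j) (co i j) : MvPolynomial (Fin 4) ℂ)
        = C (co i j) * (X 0 ^ i * X 1 ^ (3-i) * X 2 ^ j * X 3 ^ (d-j)) := by
      rw [monomial_eq, Finsupp.prod_fintype _ _ fun _ => pow_zero _, Fin.prod_univ_four,
        ee_apply0, ee_apply1, ee_apply2, ee_apply3]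
    rw [hmon]
    obtain ⟨t, ht⟩ := sub_dvd_pow_sub_pow (C b * X 2) (C a * X 3 : MvPolynomial (Fin 4) ℂ) j
    refine ⟨C (co i j) * X 0 ^ i * X 1 ^ (3-i) * ((C b)^(d-j) * X 3 ^ (d-j)) * t, ?_⟩
    rw [show (C (co i j * a ^ j * b ^ (d-j)) : MvPolynomial (Fin 4) ℂ)
        = C (co i j) * (C a)^j * (C b)^(d-j) by rw [map_mul, map_mul, map_pow, map_pow],
      show ((X 3 : MvPolynomial (Fin 4) ℂ))^d = X 3^j * X 3^(d-j) by
        rw [← pow_add, Nat.add_sub_cancel' hj'],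
      show ((C b : MvPolynomial (Fin 4) ℂ))^d = (C b)^j * (C b)^(d-j) by
        rw [← pow_add, Nat.add_sub_cancel' hj']]
    linear_combination (C (co i j) * X 0 ^ i * X 1 ^ (3-i) * ((C b)^(d-j) * X 3 ^ (d-j))) * ht
  rwa [hzero, sub_zero] at key

lemma dvd_a (d : ℕ) (co : ℕ → ℕ → ℂ) (a b : ℂ)
    (hA : ∀ i, (∑ j ∈ Finset.range (d+1), co i j * a ^ j * b ^ (d - j)) = 0) :
    (C b * X 2 - C a * X 3 : MvPolynomial (Fin 4) ℂ) ∣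
      (C a)^d * ∑ i ∈ Finset.range 4, ∑ j ∈ Finset.range (d+1),
        monomial (ee d i j) (co i j) := by
  have hzero : (∑ i ∈ Finset.range 4, ∑ j ∈ Finset.range (d+1),
      C (co i j * a ^ j * b ^ (d - j)) * (X 0 ^ i * X 1 ^ (3-i) * X 2 ^ d)
        : MvPolynomial (Fin 4) ℂ) = 0 := by
    refine Finset.sum_eq_zero fun i _ => ?_
    rw [← Finset.sum_mul, ← map_sum, hA i, map_zero, zero_mul]
  have key : (C b * X 2 - C a * X 3 : MvPolynomial (Fin 4) ℂ) ∣
      (C a)^d * (∑ i ∈ Finset.range 4, ∑ j ∈ Finset.range (d+1),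
        monomial (ee d i j) (co i j))
      - ∑ i ∈ Finset.range 4, ∑ j ∈ Finset.range (d+1),
          C (co i j * a ^ j * b ^ (d - j)) * (X 0 ^ i * X 1 ^ (3-i) * X 2 ^ d) := by
    rw [Finset.mul_sum, ← Finset.sum_sub_distrib]
    refine Finset.dvd_sum fun i _ => ?_
    rw [Finset.mul_sum, ← Finset.sum_sub_distrib]
    refine Finset.dvd_sum fun j hj => ?_
    have hj' : j ≤ d := Nat.lt_succ_iff.mp (Finset.mem_range.mp hj)
    have hmon : (monomial (ee d i j) (co i j) : MvPolynomial (Fin 4) ℂ)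
        = C (co i j) * (X 0 ^ i * X 1 ^ (3-i) * X 2 ^ j * X 3 ^ (d-j)) := by
      rw [monomial_eq, Finsupp.prod_fintype _ _ fun _ => pow_zero _, Fin.prod_univ_four,
        ee_apply0, ee_apply1, ee_apply2, ee_apply3]
    rw [hmon]
    obtain ⟨t, ht⟩ := sub_dvd_pow_sub_pow (C b * X 2) (C a * X 3 : MvPolynomial (Fin 4) ℂ) (d-j)
    refine ⟨-(C (co i j) * X 0 ^ i * X 1 ^ (3-i) * ((C a)^j * X 2 ^ j)) * t, ?_⟩
    rw [show (C (co i j * a ^ j * b ^ (d-j)) : MvPolynomial (Fin 4) ℂ)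
        = C (co i j) * (C a)^j * (C b)^(d-j) by rw [map_mul, map_mul, map_pow, map_pow],
      show ((X 2 : MvPolynomial (Fin 4) ℂ))^d = X 2^j * X 2^(d-j) by
        rw [← pow_add, Nat.add_sub_cancel' hj'],
      show ((C a : MvPolynomial (Fin 4) ℂ))^d = (C a)^j * (C a)^(d-j) by
        rw [← pow_add, Nat.add_sub_cancel' hj']]
    linear_combination (-(C (co i j) * X 0 ^ i * X 1 ^ (3-i) * ((C a)^j * X 2 ^ j))) * ht
  rwa [hzero, sub_zero] at key

/-- If `f ∈ W_d` is singular at two distinct points `(X0₁, X1₁, a, b)`, `(X0₂, X1₂, a, b)` of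
the line of the ruling of `ℙ¹ × ℙ¹` of equation `b·y₀ - a·y₁ = 0`, then that equation
divides `f`. -/
theorem fiber_divides_P1P1 (d : ℕ) (hd : 1 ≤ d)
    (f : MvPolynomial (Fin 4) ℂ) (hf : f ∈ W d)
    (a b : ℂ) (hab : (a, b) ≠ (0, 0))
    (X0₁ X1₁ X0₂ X1₂ : ℂ)
    (h1x : (X0₁, X1₁) ≠ (0, 0)) (h2x : (X0₂, X1₂) ≠ (0, 0))
    (hdist : X0₁ * X1₂ ≠ X0₂ * X1₁)
    (h1 : SingularAt f ![X0₁, X1₁, a, b]) (h2 : SingularAt f ![X0₂, X1₂, a, b]) :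
    (C b * X 2 - C a * X 3) ∣ f := by
  have hre := hrepr d f hf
  have E1 : AA d f a b 1 * X1₁^2 + 2 * AA d f a b 2 * (X0₁*X1₁) + 3 * AA d f a b 3 * X0₁^2
      = 0 := by rw [← heval0 hre X0₁ X1₁ a b]; exact h1 0
  have E2 : 3 * AA d f a b 0 * X1₁^2 + 2 * AA d f a b 1 * (X0₁*X1₁) + AA d f a b 2 * X0₁^2
      = 0 := by rw [← heval1 hre X0₁ X1₁ a b]; exact h1 1
  have E3 : AA d f a b 1 * X1₂^2 + 2 * AA d f a b 2 * (X0₂*X1₂) + 3 * AA d f a b 3 * X0₂^2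
      = 0 := by rw [← heval0 hre X0₂ X1₂ a b]; exact h2 0
  have E4 : 3 * AA d f a b 0 * X1₂^2 + 2 * AA d f a b 1 * (X0₂*X1₂) + AA d f a b 2 * X0₂^2
      = 0 := by rw [← heval1 hre X0₂ X1₂ a b]; exact h2 1
  have hD : X0₁ * X1₂ - X0₂ * X1₁ ≠ 0 := sub_ne_zero_of_ne hdist
  obtain ⟨hA0, hA1, hA2, hA3⟩ := solveA X0₁ X1₁ X0₂ X1₂
    (AA d f a b 0) (AA d f a b 1) (AA d f a b 2) (AA d f a b 3) hD E1 E2 E3 E4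
  have hAhigh : ∀ i, 4 ≤ i → AA d f a b i = 0 := by
    intro i hi
    rw [AA]
    refine Finset.sum_eq_zero fun j _ => ?_
    have hc : coeff (ee d i j) f = 0 := by
      by_contra hc
      have h3 : Finsupp.weight wx (ee d i j) = 3 :=
        (Submodule.mem_inf.mp hf).1 hc
      rw [weight_wx, ee_apply0, ee_apply1] at h3
      omega
    rw [hc, zero_mul, zero_mul]
  have hA : ∀ i, AA d f a b i = 0 := by
    intro i
    rcases Nat.lt_or_ge i 4 with h | h
    · interval_cases i <;> assumption
    · exact hAhigh i h
  have hAsum : ∀ i, (∑ j ∈ Finset.range (d+1),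
      coeff (ee d i j) f * a ^ j * b ^ (d - j)) = 0 := hA
  have hab' : a ≠ 0 ∨ b ≠ 0 := by
    by_contra hcon
    push_neg at hcon
    exact hab (by rw [hcon.1, hcon.2])
  rcases hab' with ha | hb
  · have hdvd := dvd_a d (fun i j => coeff (ee d i j) f) a b hAsum
    rw [← hre] at hdvd
    have hu : IsUnit ((C a : MvPolynomial (Fin 4) ℂ)^d) :=
      ((isUnit_iff_ne_zero.mpr ha).map C).pow d
    exact (hu.dvd_mul_left).mp hdvd
  · have hdvd := dvd_b d (fun i j => coeff (ee d i j) f) a b hAsum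
    rw [← hre] at hdvd
    have hu : IsUnit ((C b : MvPolynomial (Fin 4) ℂ)^d) :=
      ((isUnit_iff_ne_zero.mpr hb).map C).pow d
    exact (hu.dvd_mul_left).mp hdvd

end
end
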